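/- arXiv:2311.07210 — 2 statements merged into one kernel-verified Lean document; each statement's English description precedes it below -/
import Mathlib

section
/- Let ε > 0 be a small enough constant. Let G be a graph on n vertices of maximum degree at most d, where d ≥ 3, and let p = (1-ε)/(d-1). Form the random subgraph G_p of G by retaining every edge of G independently with probability p. Then with high probability (probability tending to 1 as n → ∞) every connected component of G_p has at most (9 ln n)/ε² vertices. -/
open Finset

noncomputable section

/-- The `d`-dimensional binary cube: vertices are `{0,1}^d`, adjacency is
differing in exactly one coordinate. -/
def cube (d : ℕ) : SimpleGraph (Fin d → Bool) where
  Adj x y := (Finset.univ.filter fun i => x i ≠ y i).card = 1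
  symm := by
    refine ⟨?_⟩
    intro x y h
    try dsimp only at h ⊢
    rw [Finset.filter_congr (fun i _ => by simp [ne_comm] :
      ∀ i ∈ Finset.univ, (y i ≠ x i) ↔ (x i ≠ y i))]
    exact h
  loopless := by refine ⟨?_⟩; intro x h; simp at h

instance (d : ℕ) : DecidableRel (cube d).Adj := fun x y =>
  inferInstanceAs (Decidable ((Finset.univ.filter fun i => x i ≠ y i).card = 1))

/-- Number of vertices in the connected component of `v` in `G`. -/
def compSize {V : Type*} (G : SimpleGraph V) (v : V) : ℕ :=
  Nat.card {u : V // G.Reachable v u}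

open Classical in
/-- The probability that the random subgraph of `G`, obtained by retaining each
edge of `G` independently with probability `p`, has an edge set satisfying `P`. -/
def percProb {V : Type*} [Fintype V] [DecidableEq V] (G : SimpleGraph V)
    [DecidableRel G.Adj] (p : ℝ) (P : Finset (Sym2 V) → Prop) : ℝ :=
  ∑ H ∈ G.edgeFinset.powerset,
    if P H then p ^ H.card * (1 - p) ^ (G.edgeFinset.card - H.card) else 0

set_option linter.unusedSectionVars false
namespace Subcrit

open Classical in
/-- indicator -/
def indi (P : Prop) : ℝ := if P then 1 else 0

lemma indi_nonneg (P : Prop) : 0 ≤ indi P := by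
  unfold indi; split_ifs <;> norm_num

lemma indi_le_one (P : Prop) : indi P ≤ 1 := by
  unfold indi; split_ifs <;> norm_num

lemma indi_le_indi {P Q : Prop} (h : P → Q) : indi P ≤ indi Q := by
  unfold indi; split_ifs with h1 h2 <;> simp_all

lemma indi_of_true {P : Prop} (h : P) : indi P = 1 := by simp [indi, h]

variable {V : Type} [Fintype V] [DecidableEq V]

/-- exploration state -/
structure St (V : Type) where
  D : Finset V
  Q : Finset (Sym2 V)
  S : Finset (Sym2 V)

open Classical in
def ends (e : Sym2 V) : Finset V := Finset.univ.filter (· ∈ e)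

lemma mem_ends {u : V} {e : Sym2 V} : u ∈ ends e ↔ u ∈ e := by
  simp [ends]

open Classical in
def avail (G : SimpleGraph V) [DecidableRel G.Adj] (st : St V) : Finset (Sym2 V) :=
  G.edgeFinset.filter fun e => e ∉ st.Q ∧ ∃ u ∈ st.D, u ∈ e

lemma mem_avail {G : SimpleGraph V} [DecidableRel G.Adj] {st : St V} {e : Sym2 V} :
    e ∈ avail G st ↔ e ∈ G.edgeFinset ∧ e ∉ st.Q ∧ ∃ u ∈ st.D, u ∈ e := by
  simp [avail]

def pick (A : Finset (Sym2 V)) : Option (Sym2 V) :=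
  if h : A.Nonempty then some h.choose else none

lemma pick_mem {A : Finset (Sym2 V)} {e : Sym2 V} (h : pick A = some e) : e ∈ A := by
  unfold pick at h
  split_ifs at h with h'
  · obtain rfl : h'.choose = e := by injection h
    exact h'.choose_spec

lemma pick_of_nonempty {A : Finset (Sym2 V)} (h : A.Nonempty) : ∃ e, pick A = some e := by
  unfold pick; rw [dif_pos h]; exact ⟨_, rfl⟩

variable (G : SimpleGraph V) [DecidableRel G.Adj] (k : ℕ)

def halted (st : St V) : Prop := k ≤ st.D.card ∨ avail G st = ∅

open Classical in
def step (st : St V) (a : Bool) : St V :=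
  if halted G k st then st else
    match pick (avail G st) with
    | none => st
    | some e => ⟨if a then st.D ∪ ends e else st.D, insert e st.Q,
                 if a then insert e st.S else st.S⟩

def runB (st : St V) : List Bool → St V
  | [] => st
  | a :: l => runB (step G k st a) l

open Classical in
def ansH (H : Finset (Sym2 V)) (st : St V) : Bool :=
  match pick (avail G st) with
  | none => false
  | some e => if e ∈ H then true else false

def runH (H : Finset (Sym2 V)) (st : St V) : ℕ → St V
  | 0 => st
  | n+1 => runH H (step G k st (ansH G H st)) n

def init (v : V) : St V := ⟨{v}, ∅, ∅⟩

@[simp] lemma runH_zero (H : Finset (Sym2 V)) (st : St V) : runH G k H st 0 = st := rfl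

lemma runH_succ (H : Finset (Sym2 V)) (st : St V) (n : ℕ) :
    runH G k H st (n + 1) = runH G k H (step G k st (ansH G H st)) n := rfl

@[simp] lemma runB_nil (st : St V) : runB G k st [] = st := rfl

lemma runB_cons (st : St V) (a : Bool) (l : List Bool) :
    runB G k st (a :: l) = runB G k (step G k st a) l := rfl

variable {G k}

lemma step_halted {st : St V} (h : halted G k st) (a : Bool) : step G k st a = st := by
  simp [step, h]

lemma not_halted_pick {st : St V} (h : ¬ halted G k st) :
    ∃ e, pick (avail G st) = some e ∧ e ∈ avail G st := by
  have hne : (avail G st).Nonempty := by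
    rcases Finset.eq_empty_or_nonempty (avail G st) with h' | h'
    · exact absurd (Or.inr h') h
    · exact h'
  obtain ⟨e, he⟩ := pick_of_nonempty hne
  exact ⟨e, he, pick_mem he⟩

lemma step_spec {st : St V} (h : ¬ halted G k st) {e : Sym2 V}
    (hp : pick (avail G st) = some e) (a : Bool) :
    step G k st a = ⟨if a then st.D ∪ ends e else st.D, insert e st.Q,
                 if a then insert e st.S else st.S⟩ := by
  unfold step
  rw [if_neg h, hp]

lemma ansH_spec {H : Finset (Sym2 V)} {st : St V} {e : Sym2 V}
    (hp : pick (avail G st) = some e) :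
    ansH G H st = if e ∈ H then true else false := by
  unfold ansH
  rw [hp]


/-! ### Invariants -/

structure Inv (G : SimpleGraph V) [DecidableRel G.Adj] (k : ℕ) (v : V) (st : St V) : Prop where
  hv : v ∈ st.D
  hQE : st.Q ⊆ G.edgeFinset
  hSQ : st.S ⊆ st.Q
  hQD : ∀ e ∈ st.Q, ∃ u ∈ st.D, u ∈ e
  hSD : ∀ e ∈ st.S, ∀ u ∈ e, u ∈ st.D
  hDS : st.D.card ≤ st.S.card + 1
  hDk : st.D.card ≤ k

variable {v : V}

lemma Inv.init (hk : 1 ≤ k) (v : V) : Inv G k v (init v) := by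
  constructor <;> simp [Subcrit.init, hk]

lemma ends_card {e : Sym2 V} (he : e ∈ G.edgeFinset) {u : V} (hu : u ∈ e) :
    ∃ y, ends e = insert y {u} := by
  induction e with
  | _ x y =>
    have hxy : x ≠ y := by
      have := (SimpleGraph.mem_edgeFinset.1 he)
      exact fun h => (SimpleGraph.not_isDiag_of_mem_edgeSet G this) (by simp [h])
    have hends : ends (s(x, y)) = {x, y} := by
      ext z; simp [mem_ends, Sym2.mem_iff]
    rcases Sym2.mem_iff.1 hu with rfl | rfl
    · exact ⟨y, by rw [hends, Finset.pair_comm]⟩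
    · exact ⟨x, by rw [hends]⟩

lemma Inv.step (I : Inv G k v st) (a : Bool) : Inv G k v (step G k st a) := by
  by_cases h : halted G k st
  · rwa [step_halted h]
  obtain ⟨e, hp, he⟩ := not_halted_pick h
  rw [step_spec h hp a]
  obtain ⟨hE, hQ, u, huD, hue⟩ := mem_avail.1 he
  have hDsub : st.D ⊆ (if a then st.D ∪ ends e else st.D) := by
    split_ifs <;> simp [Finset.subset_union_left]
  have hDcard : (if a then st.D ∪ ends e else st.D).card ≤ st.D.card + 1 := by
    obtain ⟨y, hy⟩ := ends_card (G := G) hE hue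
    split_ifs
    · calc (st.D ∪ ends e).card ≤ (insert y st.D).card := by
            apply Finset.card_le_card
            rw [hy]
            intro z hz
            rcases Finset.mem_union.1 hz with hz | hz
            · exact Finset.mem_insert_of_mem hz
            · rcases Finset.mem_insert.1 hz with rfl | hz
              · exact Finset.mem_insert_self _ _
              · simp at hz; subst hz; exact Finset.mem_insert_of_mem huD
          _ ≤ st.D.card + 1 := Finset.card_insert_le _ _
    · omega
  have hkD : st.D.card < k := by
    by_contra hc
    exact h (Or.inl (by omega))
  constructor
  · exact hDsub I.hv
  · intro x hx
    rcases Finset.mem_insert.1 hx with rfl | hx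
    · exact hE
    · exact I.hQE hx
  · intro x hx
    split_ifs at hx with ha
    · rcases Finset.mem_insert.1 hx with rfl | hx
      · exact Finset.mem_insert_self _ _
      · exact Finset.mem_insert_of_mem (I.hSQ hx)
    · exact Finset.mem_insert_of_mem (I.hSQ hx)
  · intro x hx
    rcases Finset.mem_insert.1 hx with rfl | hx
    · exact ⟨u, hDsub huD, hue⟩
    · obtain ⟨w, hw, hwx⟩ := I.hQD x hx
      exact ⟨w, hDsub hw, hwx⟩
  · intro x hx w hwx
    split_ifs at hx with ha
    · rcases Finset.mem_insert.1 hx with rfl | hx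
      · simp only [if_pos ha]
        exact Finset.mem_union_right _ (mem_ends.2 hwx)
      · exact hDsub (I.hSD x hx w hwx)
    · exact hDsub (I.hSD x hx w hwx)
  · show (if a then st.D ∪ ends e else st.D).card ≤
        (if a then insert e st.S else st.S).card + 1
    have := I.hDS
    split_ifs with ha
    · have he' : e ∉ st.S := fun hc => hQ (I.hSQ hc)
      have : (insert e st.S).card = st.S.card + 1 := Finset.card_insert_of_notMem he'
      have h2 : (st.D ∪ ends e).card ≤ st.D.card + 1 := by simpa [if_pos ha] using hDcard
      omega
    · omega
  · show (if a then st.D ∪ ends e else st.D).card ≤ k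
    split_ifs with ha
    · have h2 : (st.D ∪ ends e).card ≤ st.D.card + 1 := by simpa [if_pos ha] using hDcard
      omega
    · omega

lemma step_Q_subset (st : St V) (a : Bool) : st.Q ⊆ (step G k st a).Q := by
  by_cases h : halted G k st
  · rw [step_halted h]
  obtain ⟨e, hp, he⟩ := not_halted_pick h
  rw [step_spec h hp a]
  exact Finset.subset_insert _ _

lemma step_Q_card {st : St V} (h : ¬ halted G k st) (a : Bool) :
    (step G k st a).Q.card = st.Q.card + 1 := by
  obtain ⟨e, hp, he⟩ := not_halted_pick h
  rw [step_spec h hp a]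
  exact Finset.card_insert_of_notMem (mem_avail.1 he).2.1

lemma step_S_card (st : St V) (a : Bool) :
    (step G k st a).S.card ≤ st.S.card + (if a then 1 else 0) := by
  by_cases h : halted G k st
  · rw [step_halted h]; split_ifs <;> omega
  obtain ⟨e, hp, he⟩ := not_halted_pick h
  rw [step_spec h hp a]
  split_ifs
  · exact Finset.card_insert_le _ _
  · simp

lemma Inv.runB (I : Inv G k v st) : ∀ (l : List Bool), Inv G k v (runB G k st l) := by
  intro l
  induction l generalizing st with
  | nil => exact I
  | cons a l ih => exact ih (I.step a)

lemma Inv.runH (I : Inv G k v st) (H : Finset (Sym2 V)) :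
    ∀ n, Inv G k v (runH G k H st n) := by
  intro n
  induction n generalizing st with
  | zero => exact I
  | succ n ih => exact ih (I.step _)

/-! ### Counting: bound on the number of queries -/

lemma two_le_filter_card {e : Sym2 V} (hE : e ∈ G.edgeFinset) {D : Finset V}
    (hD : ∀ u ∈ e, u ∈ D) : 2 ≤ (D.filter (· ∈ e)).card := by
  classical
  induction e with
  | _ x y =>
    have hxy : x ≠ y := fun h =>
      (SimpleGraph.not_isDiag_of_mem_edgeSet G (SimpleGraph.mem_edgeFinset.1 hE)) (by simp [h])
    have hsub : ({x, y} : Finset V) ⊆ D.filter (· ∈ s(x, y)) := by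
      intro z hz
      rcases Finset.mem_insert.1 hz with rfl | hz
      · exact Finset.mem_filter.2 ⟨hD z (Sym2.mem_mk_left _ _), Sym2.mem_mk_left _ _⟩
      · have : z = y := Finset.mem_singleton.1 hz
        subst this
        exact Finset.mem_filter.2 ⟨hD z (Sym2.mem_mk_right _ _), Sym2.mem_mk_right _ _⟩
    calc 2 = ({x, y} : Finset V).card := (Finset.card_pair hxy).symm
      _ ≤ _ := Finset.card_le_card hsub

lemma Qcard_le {d : ℕ} (hd : 3 ≤ d) (hdeg : ∀ u, G.degree u ≤ d)
    (I : Inv G k v st) (hna : ¬ halted G k st) : st.Q.card ≤ (d - 1) * k := by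
  classical
  -- double counting
  have hdc : st.Q.card + st.S.card ≤ ∑ u ∈ st.D, G.degree u := by
    have h1 : ∀ e ∈ st.Q, 1 + (if e ∈ st.S then 1 else 0) ≤ (st.D.filter (· ∈ e)).card := by
      intro e he
      split_ifs with hS
      · exact two_le_filter_card (I.hQE he) (I.hSD e hS)
      · obtain ⟨u, huD, hue⟩ := I.hQD e he
        have : u ∈ st.D.filter (· ∈ e) := Finset.mem_filter.2 ⟨huD, hue⟩
        have := Finset.card_pos.2 ⟨u, this⟩
        omega
    have h2 : st.Q.card + st.S.card = ∑ e ∈ st.Q, (1 + if e ∈ st.S then 1 else 0) := by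
      rw [Finset.sum_add_distrib, Finset.sum_const, Finset.sum_ite_mem]
      have : st.Q ∩ st.S = st.S := Finset.inter_eq_right.2 I.hSQ
      simp [this]
    have h3 : ∑ e ∈ st.Q, (st.D.filter (· ∈ e)).card
        ≤ ∑ e ∈ G.edgeFinset, (st.D.filter (· ∈ e)).card :=
      Finset.sum_le_sum_of_subset I.hQE
    have h4 : ∑ e ∈ G.edgeFinset, (st.D.filter (· ∈ e)).card = ∑ u ∈ st.D, G.degree u := by
      have : ∀ e ∈ G.edgeFinset, (st.D.filter (· ∈ e)).card = ∑ u ∈ st.D, if u ∈ e then 1 else 0 := by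
        intro e _; rw [Finset.card_filter]
      rw [Finset.sum_congr rfl this, Finset.sum_comm]
      apply Finset.sum_congr rfl
      intro u _
      rw [← SimpleGraph.card_incidenceFinset_eq_degree, SimpleGraph.incidenceFinset_eq_filter,
        Finset.card_filter]
    calc st.Q.card + st.S.card = ∑ e ∈ st.Q, (1 + if e ∈ st.S then 1 else 0) := h2
      _ ≤ ∑ e ∈ st.Q, (st.D.filter (· ∈ e)).card := Finset.sum_le_sum h1
      _ ≤ ∑ e ∈ G.edgeFinset, (st.D.filter (· ∈ e)).card := h3
      _ = ∑ u ∈ st.D, G.degree u := h4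
  have hdd : ∑ u ∈ st.D, G.degree u ≤ d * st.D.card := by
    calc ∑ u ∈ st.D, G.degree u ≤ ∑ _u ∈ st.D, d := Finset.sum_le_sum fun u _ => hdeg u
      _ = d * st.D.card := by rw [Finset.sum_const]; ring
  have hDk : st.D.card < k := by
    by_contra hc
    exact hna (Or.inl (by omega))
  obtain ⟨d', rfl⟩ : ∃ d', d = d' + 1 := ⟨d - 1, by omega⟩
  have hd' : 2 ≤ d' := by omega
  have hDS := I.hDS
  set q := st.Q.card
  set s := st.S.card
  set m := st.D.card
  have key : q + s ≤ (d' + 1) * m := le_trans hdc hdd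
  show q ≤ (d' + 1 - 1) * k
  rw [Nat.add_sub_cancel]
  rcases le_or_gt (s + 2) k with hc | hc
  · nlinarith [Nat.mul_le_mul_left d' (show s + 2 ≤ k from hc)]
  · nlinarith [Nat.mul_le_mul_left d' (show m + 1 ≤ k from hDk)]

/-! ### Halting of the run driven by `H` -/

lemma runH_of_halted {st : St V} (h : halted G k st) (H : Finset (Sym2 V)) :
    ∀ n, runH G k H st n = st := by
  intro n
  induction n generalizing st with
  | zero => rfl
  | succ n ih =>
    show runH G k H (step G k st (ansH G H st)) n = st
    rw [step_halted h, ih h]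

lemma runH_growth (H : Finset (Sym2 V)) :
    ∀ n (st : St V), halted G k (runH G k H st n) ∨
      st.Q.card + n ≤ (runH G k H st n).Q.card := by
  intro n
  induction n with
  | zero =>
    intro st
    right
    rw [runH_zero]
    omega
  | succ n ih =>
    intro st
    by_cases h : halted G k st
    · left
      rw [runH_of_halted h]
      exact h
    · show _ ∨ st.Q.card + (n+1) ≤ (runH G k H (step G k st (ansH G H st)) n).Q.card
      rcases ih (step G k st (ansH G H st)) with hl | hr
      · left; exact hl
      · right
        rw [step_Q_card h] at hr
        omega

lemma runH_halted_final {d : ℕ} (hd : 3 ≤ d) (hdeg : ∀ u, G.degree u ≤ d)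
    (hk : 1 ≤ k) (H : Finset (Sym2 V)) (v : V) :
    halted G k (runH G k H (init v) ((d - 1) * k + 1)) := by
  set M := (d - 1) * k + 1 with hM
  by_contra hna
  have I : Inv G k v (runH G k H (init v) M) := (Inv.init hk v).runH H M
  have hb := Qcard_le hd hdeg I hna
  rcases runH_growth (G := G) (k := k) H M (init v) with hl | hr
  · exact hna hl
  · have : (init v).Q.card = 0 := by simp [init]
    omega

lemma runH_S (H : Finset (Sym2 V)) :
    ∀ n (st : St V), st.S = st.Q ∩ H → (runH G k H st n).S = (runH G k H st n).Q ∩ H := by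
  intro n
  induction n with
  | zero => intro st h; exact h
  | succ n ih =>
    intro st h
    apply ih
    by_cases hh : halted G k st
    · rw [step_halted hh]; exact h
    obtain ⟨e, hp, he⟩ := not_halted_pick hh
    have heQ : e ∉ st.Q := (mem_avail.1 he).2.1
    rw [step_spec hh hp, ansH_spec hp]
    by_cases heH : e ∈ H
    · simp only [if_pos heH, if_pos rfl]
      show insert e st.S = insert e st.Q ∩ H
      rw [h, Finset.insert_inter_of_mem heH]
    · simp only [if_neg heH]
      show st.S = insert e st.Q ∩ H
      rw [h, Finset.insert_inter_of_notMem heH]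

/-! ### If the component is large, the run discovers `k` vertices -/

lemma comp_le_card {H : Finset (Sym2 V)} (hH : H ⊆ G.edgeFinset) {D : Finset V}
    {Q : Finset (Sym2 V)} {v : V} (hv : v ∈ D)
    (hcl : ∀ e ∈ G.edgeFinset, e ∉ Q → ¬ ∃ u ∈ D, u ∈ e)
    (hQD : ∀ e ∈ Q, e ∈ H → ∀ u ∈ e, u ∈ D) :
    compSize (SimpleGraph.fromEdgeSet (↑H : Set (Sym2 V))) v ≤ D.card := by
  classical
  set GH := SimpleGraph.fromEdgeSet (↑H : Set (Sym2 V)) with hGH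
  have key : ∀ (x u : V), GH.Walk x u → x ∈ D → u ∈ D := by
    intro x u w
    induction w with
    | nil => exact id
    | @cons x y u hadj p ih =>
      intro hx
      apply ih
      rw [hGH, SimpleGraph.fromEdgeSet_adj] at hadj
      have heH : s(x, y) ∈ H := hadj.1
      have heE : s(x, y) ∈ G.edgeFinset := hH heH
      have heQ : s(x, y) ∈ Q := by
        by_contra hq
        exact hcl _ heE hq ⟨x, hx, Sym2.mem_mk_left _ _⟩
      exact hQD _ heQ heH y (Sym2.mem_mk_right _ _)
  have hreach : ∀ u : V, GH.Reachable v u → u ∈ D := by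
    intro u r
    exact key v u r.some hv
  rw [compSize, Nat.card_eq_fintype_card, Fintype.card_subtype]
  apply Finset.card_le_card
  intro u hu
  exact hreach u (Finset.mem_filter.1 hu).2

lemma reach {d : ℕ} (hd : 3 ≤ d) (hdeg : ∀ u, G.degree u ≤ d) (hk : 1 ≤ k)
    {H : Finset (Sym2 V)} (hH : H ⊆ G.edgeFinset) (v : V)
    (hcomp : k ≤ compSize (SimpleGraph.fromEdgeSet (↑H : Set (Sym2 V))) v) :
    k ≤ (runH G k H (init v) ((d - 1) * k + 1)).D.card := by
  by_contra hlt
  push_neg at hlt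
  set st' := runH G k H (init v) ((d - 1) * k + 1) with hst'
  have hhalt : halted G k st' := runH_halted_final hd hdeg hk H v
  have hav : avail G st' = ∅ := by
    rcases hhalt with h | h
    · omega
    · exact h
  have I : Inv G k v st' := (Inv.init hk v).runH H _
  have hS : st'.S = st'.Q ∩ H := runH_S H _ _ (by simp [init])
  have hcl : ∀ e ∈ G.edgeFinset, e ∉ st'.Q → ¬ ∃ u ∈ st'.D, u ∈ e := by
    intro e he hq hex
    have : e ∈ avail G st' := mem_avail.2 ⟨he, hq, hex⟩
    rw [hav] at this
    exact absurd this (Finset.notMem_empty e)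
  have hQD : ∀ e ∈ st'.Q, e ∈ H → ∀ u ∈ e, u ∈ st'.D := by
    intro e heQ heH u hu
    exact I.hSD e (by rw [hS]; exact Finset.mem_inter.2 ⟨heQ, heH⟩) u hu
  have := comp_le_card hH I.hv hcl hQD
  omega

/-! ### The run depends on `H` only through unqueried edges -/

lemma runH_congr : ∀ (n : ℕ) (st : St V) (H H' : Finset (Sym2 V)),
    (∀ e, e ∉ st.Q → (e ∈ H ↔ e ∈ H')) → runH G k H st n = runH G k H' st n := by
  intro n
  induction n with
  | zero => intro st H H' _; rfl
  | succ n ih =>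
    intro st H H' hagree
    rw [runH_succ, runH_succ]
    by_cases hh : halted G k st
    · rw [step_halted hh, step_halted hh]
      exact ih st H H' hagree
    obtain ⟨e, hp, he⟩ := not_halted_pick hh
    have heQ : e ∉ st.Q := (mem_avail.1 he).2.1
    have hans : ansH G H st = ansH G H' st := by
      rw [ansH_spec hp, ansH_spec hp]
      by_cases heH : e ∈ H
      · rw [if_pos heH, if_pos ((hagree e heQ).1 heH)]
      · rw [if_neg heH, if_neg (fun hc => heH ((hagree e heQ).2 hc))]
    rw [hans]
    apply ih
    intro x hx
    apply hagree
    intro hxQ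
    exact hx (step_Q_subset st _ hxQ)

/-! ### Sum of weights over the powerset is 1 -/

lemma sum_w (p : ℝ) (F : Finset (Sym2 V)) :
    ∑ H ∈ F.powerset, p ^ H.card * (1 - p) ^ (F.card - H.card) = 1 := by
  classical
  have h := Finset.prod_add (fun _ : Sym2 V => p) (fun _ : Sym2 V => 1 - p) F
  simp only [Finset.prod_const, add_sub_cancel, one_pow] at h
  calc ∑ H ∈ F.powerset, p ^ H.card * (1 - p) ^ (F.card - H.card)
      = ∑ H ∈ F.powerset, p ^ H.card * (1 - p) ^ (F \ H).card :=
        Finset.sum_congr rfl (fun t ht => by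
          rw [Finset.card_sdiff_of_subset (Finset.mem_powerset.1 ht)])
    _ = 1 := h.symm

/-! ### Main distributional identity -/

open Classical in
lemma main_eq (p : ℝ) (P : St V → Prop) :
    ∀ (n : ℕ) (st : St V) (F : Finset (Sym2 V)), G.edgeFinset ⊆ st.Q ∪ F →
    ∑ H ∈ F.powerset, p ^ H.card * (1 - p) ^ (F.card - H.card) * indi (P (runH G k H st n))
      = ∑ b : Fin n → Bool,
          (∏ i, if b i then p else 1 - p) * indi (P (runB G k st (List.ofFn b))) := by
  intro n
  induction n with
  | zero =>
    intro st F _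
    simp only [runH_zero, List.ofFn_zero, runB_nil]
    rw [← Finset.sum_mul, sum_w, one_mul]
    simp
  | succ n ih =>
    intro st F hsub
    -- rewrite the RHS as a sum over Bool × (Fin n → Bool)
    have hRHS : ∑ b : Fin (n+1) → Bool,
          (∏ i, if b i then p else 1 - p) * indi (P (runB G k st (List.ofFn b)))
        = ∑ a : Bool, (if a then p else 1 - p) *
            ∑ c : Fin n → Bool,
              (∏ i, if c i then p else 1 - p) *
                indi (P (runB G k (step G k st a) (List.ofFn c))) := by
      rw [← Equiv.sum_comp (Fin.consEquiv (fun _ : Fin (n+1) => Bool))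
        (fun b => (∏ i, if b i then p else 1 - p) * indi (P (runB G k st (List.ofFn b))))]
      rw [Fintype.sum_prod_type]
      apply Finset.sum_congr rfl
      intro a _
      rw [Finset.mul_sum]
      apply Finset.sum_congr rfl
      intro c _
      have hfun : (Fin.consEquiv (fun _ : Fin (n+1) => Bool)) (a, c) = Fin.cons a c := by
        funext i; exact Fin.consEquiv_apply _ _ i
      have h1 : List.ofFn (Fin.consEquiv (fun _ : Fin (n+1) => Bool) (a, c)) =
          a :: List.ofFn c := by
        rw [hfun, List.ofFn_succ]
        simp [Fin.cons_zero, Fin.cons_succ]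
      have h2 : ∏ i, (if (Fin.consEquiv (fun _ : Fin (n+1) => Bool) (a, c)) i then p else 1 - p)
          = (if a then p else 1 - p) * ∏ i, (if c i then p else 1 - p) := by
        rw [hfun, Fin.prod_univ_succ]
        simp only [Fin.cons_zero, Fin.cons_succ]
      rw [h1, h2, runB_cons]
      ring
    by_cases hh : halted G k st
    · have hL : ∀ H, runH G k H st (n+1) = runH G k H st n := by
        intro H
        rw [runH_succ, step_halted hh]
      simp only [hL]
      rw [ih st F hsub, hRHS]
      have : ∀ a : Bool, step G k st a = st := fun a => step_halted hh a
      simp only [this]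
      rw [Fintype.sum_bool]
      simp only [if_true, Bool.false_eq_true, if_false]
      ring
    · obtain ⟨e, hp, he⟩ := not_halted_pick hh
      obtain ⟨heE, heQ, hinc⟩ := mem_avail.1 he
      have heF : e ∈ F := by
        rcases Finset.mem_union.1 (hsub heE) with h | h
        · exact absurd h heQ
        · exact h
      set F' := F.erase e with hF'
      have heF' : e ∉ F' := Finset.notMem_erase _ _
      have hFins : F = insert e F' := (Finset.insert_erase heF).symm
      have hcard : F.card = F'.card + 1 := by
        rw [hFins, Finset.card_insert_of_notMem heF']
      set stf : St V := ⟨st.D, insert e st.Q, st.S⟩ with hstf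
      set stt : St V := ⟨st.D ∪ ends e, insert e st.Q, insert e st.S⟩ with hstt
      have hstepf : step G k st false = stf := by rw [step_spec hh hp]; rfl
      have hstept : step G k st true = stt := by rw [step_spec hh hp]; rfl
      have hsubf : G.edgeFinset ⊆ stf.Q ∪ F' := by
        intro x hx
        rcases Finset.mem_union.1 (hsub hx) with h | h
        · exact Finset.mem_union_left _ (Finset.mem_insert_of_mem h)
        · rw [hFins] at h
          rcases Finset.mem_insert.1 h with rfl | h
          · exact Finset.mem_union_left _ (Finset.mem_insert_self _ _)
          · exact Finset.mem_union_right _ h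
      have hsubt : G.edgeFinset ⊆ stt.Q ∪ F' := hsubf
      -- decompose the LHS
      rw [hFins, Finset.sum_powerset_insert heF', ← hFins]
      have hterm1 : ∀ H ∈ F'.powerset,
          p ^ H.card * (1 - p) ^ (F.card - H.card) * indi (P (runH G k H st (n+1)))
          = (1 - p) * (p ^ H.card * (1 - p) ^ (F'.card - H.card) *
              indi (P (runH G k H stf n))) := by
        intro H hH
        have hHF' : H ⊆ F' := Finset.mem_powerset.1 hH
        have heH : e ∉ H := fun hc => heF' (hHF' hc)
        have hrun : runH G k H st (n+1) = runH G k H stf n := by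
          rw [runH_succ, ansH_spec hp, if_neg heH, hstepf]
        have hcc : H.card ≤ F'.card := Finset.card_le_card hHF'
        have hexp : F.card - H.card = (F'.card - H.card) + 1 := by omega
        rw [hrun, hexp, pow_succ]
        ring
      have hterm2 : ∀ H ∈ F'.powerset,
          p ^ (insert e H).card * (1 - p) ^ (F.card - (insert e H).card) *
              indi (P (runH G k (insert e H) st (n+1)))
          = p * (p ^ H.card * (1 - p) ^ (F'.card - H.card) *
              indi (P (runH G k H stt n))) := by
        intro H hH
        have hHF' : H ⊆ F' := Finset.mem_powerset.1 hH
        have heH : e ∉ H := fun hc => heF' (hHF' hc)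
        have hrun : runH G k (insert e H) st (n+1) = runH G k H stt n := by
          rw [runH_succ, ansH_spec hp, if_pos (Finset.mem_insert_self e H), hstept]
          apply runH_congr
          intro x hx
          have hxe : x ≠ e := by
            intro hc; subst hc
            exact hx (Finset.mem_insert_self _ _)
          simp [Finset.mem_insert, hxe]
        have hcc : H.card ≤ F'.card := Finset.card_le_card hHF'
        have hic : (insert e H).card = H.card + 1 := Finset.card_insert_of_notMem heH
        rw [hrun, hic, show F.card - (H.card + 1) = F'.card - H.card from by omega, pow_succ]
        ring
      rw [Finset.sum_congr rfl hterm1, Finset.sum_congr rfl hterm2,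
        ← Finset.mul_sum, ← Finset.mul_sum, ih stf F' hsubf, ih stt F' hsubt, hRHS,
        Fintype.sum_bool]
      simp only [if_pos, if_neg, Bool.false_eq_true, ite_true, ite_false, hstepf, hstept]
      ring

/-! ### Success count vs number of `true` bits -/

lemma runB_S_le : ∀ (l : List Bool) (st : St V),
    (runB G k st l).S.card ≤ st.S.card + l.count true := by
  intro l
  induction l with
  | nil => intro st; simp
  | cons a l ih =>
    intro st
    rw [runB_cons]
    calc (runB G k (step G k st a) l).S.card
        ≤ (step G k st a).S.card + l.count true := ih _
      _ ≤ st.S.card + (if a then 1 else 0) + l.count true := by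
          have := step_S_card (G := G) (k := k) st a
          omega
      _ ≤ st.S.card + (a :: l).count true := by
          rw [List.count_cons]
          by_cases ha : a = true <;> simp [ha] <;> omega

lemma count_ofFn : ∀ (n : ℕ) (b : Fin n → Bool),
    (List.ofFn b).count true = ∑ i, (if b i then 1 else 0) := by
  intro n
  induction n with
  | zero => intro b; simp
  | succ n ih =>
    intro b
    rw [List.ofFn_succ, List.count_cons, ih (fun i => b i.succ), Fin.sum_univ_succ]
    by_cases hb : b 0 = true <;> simp [hb] <;> omega

/-! ### Chernoff bound for the binomial sum -/

open Classical in
lemma chern (p t : ℝ) (hp0 : 0 ≤ p) (hp1 : p ≤ 1) (ht : 1 ≤ t) (M a : ℕ) :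
    ∑ b : Fin M → Bool, (∏ i, if b i then p else 1 - p) *
        indi (a ≤ ∑ i, (if b i then (1:ℕ) else 0))
      ≤ t⁻¹ ^ a * (t * p + (1 - p)) ^ M := by
  have ht0 : 0 < t := lt_of_lt_of_le one_pos ht
  have hq0 : 0 ≤ 1 - p := by linarith
  have key : ∀ b : Fin M → Bool,
      (∏ i, if b i then p else 1 - p) * indi (a ≤ ∑ i, (if b i then (1:ℕ) else 0))
      ≤ t⁻¹ ^ a * ∏ i, (if b i then t * p else 1 - p) := by
    intro b
    have hprodnn : 0 ≤ ∏ i, (if b i then p else 1 - p) := by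
      apply Finset.prod_nonneg
      intro i _
      split_ifs <;> assumption
    have hprod : ∏ i, (if b i then t * p else 1 - p)
        = t ^ (∑ i, (if b i then (1:ℕ) else 0)) * ∏ i, (if b i then p else 1 - p) := by
      have hpt : ∀ i : Fin M, (if b i then t * p else 1 - p)
          = t ^ (if b i then (1:ℕ) else 0) * (if b i then p else 1 - p) := by
        intro i
        by_cases hbi : b i <;> simp [hbi]
      rw [Finset.prod_congr rfl (fun i _ => hpt i), Finset.prod_mul_distrib,
        Finset.prod_pow_eq_pow_sum]
    by_cases hind : a ≤ ∑ i, (if b i then (1:ℕ) else 0)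
    · rw [indi_of_true hind, mul_one, hprod, ← mul_assoc]
      have h1 : (1:ℝ) ≤ t⁻¹ ^ a * t ^ (∑ i, (if b i then (1:ℕ) else 0)) := by
        rw [inv_pow, inv_mul_eq_div, le_div_iff₀ (by positivity), one_mul]
        exact pow_le_pow_right₀ ht hind
      nlinarith [mul_le_mul_of_nonneg_right h1 hprodnn]
    · rw [indi, if_neg hind, mul_zero]
      have : 0 ≤ ∏ i, (if b i then t * p else 1 - p) := by
        apply Finset.prod_nonneg
        intro i _
        split_ifs
        · positivity
        · exact hq0
      positivity
  calc ∑ b : Fin M → Bool, (∏ i, if b i then p else 1 - p) *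
        indi (a ≤ ∑ i, (if b i then (1:ℕ) else 0))
      ≤ ∑ b : Fin M → Bool, t⁻¹ ^ a * ∏ i, (if b i then t * p else 1 - p) :=
        Finset.sum_le_sum (fun b _ => key b)
    _ = t⁻¹ ^ a * ∑ b : Fin M → Bool, ∏ i, (if b i then t * p else 1 - p) := by
        rw [Finset.mul_sum]
    _ = t⁻¹ ^ a * (t * p + (1 - p)) ^ M := by
        have h := Finset.prod_univ_sum (fun _ : Fin M => (Finset.univ : Finset Bool))
          (fun _ y => if y then t * p else 1 - p)
        rw [Fintype.piFinset_univ] at h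
        rw [← h]
        have h2 : ∀ i : Fin M, (∑ j : Bool, if j = true then t * p else 1 - p)
            = t * p + (1 - p) := by
          intro i
          rw [Fintype.sum_bool]
          simp
        rw [Finset.prod_congr rfl (fun i _ => h2 i), Finset.prod_const, Finset.card_univ,
          Fintype.card_fin]

/-! ### Per-vertex bound -/

open Classical in
lemma per_vertex {d : ℕ} (hd : 3 ≤ d) (hdeg : ∀ u, G.degree u ≤ d) (hk : 1 ≤ k)
    (p t : ℝ) (hp0 : 0 ≤ p) (hp1 : p ≤ 1) (ht : 1 ≤ t) (v : V) :
    ∑ H ∈ G.edgeFinset.powerset, p ^ H.card * (1 - p) ^ (G.edgeFinset.card - H.card) *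
        indi (k ≤ compSize (SimpleGraph.fromEdgeSet (↑H : Set (Sym2 V))) v)
      ≤ t⁻¹ ^ (k - 1) * (t * p + (1 - p)) ^ ((d - 1) * k + 1) := by
  have hq0 : 0 ≤ 1 - p := by linarith
  set M := (d - 1) * k + 1 with hM
  have step1 : ∑ H ∈ G.edgeFinset.powerset,
        p ^ H.card * (1 - p) ^ (G.edgeFinset.card - H.card) *
        indi (k ≤ compSize (SimpleGraph.fromEdgeSet (↑H : Set (Sym2 V))) v)
      ≤ ∑ H ∈ G.edgeFinset.powerset,
        p ^ H.card * (1 - p) ^ (G.edgeFinset.card - H.card) *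
        indi (k ≤ (runH G k H (init v) M).D.card) := by
    apply Finset.sum_le_sum
    intro H hH
    have hw : 0 ≤ p ^ H.card * (1 - p) ^ (G.edgeFinset.card - H.card) := by positivity
    apply mul_le_mul_of_nonneg_left _ hw
    apply indi_le_indi
    intro hcomp
    exact reach hd hdeg hk (Finset.mem_powerset.1 hH) v hcomp
  have step2 : ∑ H ∈ G.edgeFinset.powerset,
        p ^ H.card * (1 - p) ^ (G.edgeFinset.card - H.card) *
        indi (k ≤ (runH G k H (init v) M).D.card)
      = ∑ b : Fin M → Bool, (∏ i, if b i then p else 1 - p) *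
        indi (k ≤ (runB G k (init v) (List.ofFn b)).D.card) :=
    main_eq p (fun st => k ≤ st.D.card) M (init v) G.edgeFinset
      (by intro x hx; exact Finset.mem_union_right _ hx)
  have step3 : ∑ b : Fin M → Bool, (∏ i, if b i then p else 1 - p) *
        indi (k ≤ (runB G k (init v) (List.ofFn b)).D.card)
      ≤ ∑ b : Fin M → Bool, (∏ i, if b i then p else 1 - p) *
        indi ((k - 1) ≤ ∑ i, (if b i then (1:ℕ) else 0)) := by
    apply Finset.sum_le_sum
    intro b _
    have hν : 0 ≤ ∏ i, if b i then p else 1 - p := by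
      apply Finset.prod_nonneg
      intro i _
      split_ifs <;> assumption
    apply mul_le_mul_of_nonneg_left _ hν
    apply indi_le_indi
    intro hD
    have I : Inv G k v (runB G k (init v) (List.ofFn b)) := (Inv.init hk v).runB _
    have hDS := I.hDS
    have hS := runB_S_le (G := G) (k := k) (List.ofFn b) (init v)
    rw [count_ofFn] at hS
    have hS0 : (init v : St V).S.card = 0 := rfl
    omega
  calc _ ≤ _ := step1
    _ = _ := step2
    _ ≤ _ := step3
    _ ≤ _ := chern p t hp0 hp1 ht M (k - 1)

/-! ### Quadratic bound on `exp` -/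

lemma exp_quad {x : ℝ} (h0 : 0 ≤ x) (h1 : x ≤ 1) :
    Real.exp x ≤ 1 + x + (3/4) * x ^ 2 := by
  have h := Real.exp_bound' h0 h1 (n := 2) (by norm_num)
  have hs : ∑ m ∈ Finset.range 2, x ^ m / (Nat.factorial m) = 1 + x := by
    simp [Finset.sum_range_succ, Nat.factorial]
  rw [hs] at h
  norm_num [Nat.factorial] at h
  linarith

end Subcrit

open Subcrit in
set_option maxHeartbeats 1000000 in
/-- **Subcritical percolation on bounded-degree graphs.**
There exists `ε₀ > 0` such that for every `0 < ε ≤ ε₀`, every `d ≥ 3` and every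
graph `G` on `n` vertices of maximum degree at most `d`, in the random subgraph
of `G` obtained by retaining each edge independently with probability
`p = (1-ε)/(d-1)`, the probability that some connected component has more than
`9 ln n / ε²` vertices is at most `n ^ (-1/4)` (so whp all components have at
most `9 ln n / ε²` vertices). -/
theorem subcritical_small_components :
    ∃ ε₀ : ℝ, 0 < ε₀ ∧
      ∀ ε : ℝ, 0 < ε → ε ≤ ε₀ →
      ∀ (V : Type) [Fintype V] [DecidableEq V]
        (G : SimpleGraph V) [DecidableRel G.Adj] (d : ℕ),
        3 ≤ d → (∀ v : V, G.degree v ≤ d) →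
        percProb G ((1 - ε) / ((d : ℝ) - 1))
          (fun H => ∃ v : V,
            (9 * Real.log (Fintype.card V) / ε ^ 2) <
              (compSize (SimpleGraph.fromEdgeSet (↑H : Set (Sym2 V))) v : ℝ))
          ≤ (Fintype.card V : ℝ) ^ (-(1 / 4 : ℝ)) := by
  classical
  refine ⟨1/4, by norm_num, ?_⟩
  intro ε hε hε4 V _ _ G _ d hd hdeg
  set n := Fintype.card V with hn
  set p : ℝ := (1 - ε) / ((d : ℝ) - 1) with hp
  have hd3 : (3:ℝ) ≤ (d:ℝ) := by exact_mod_cast hd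
  have hε1 : ε ≤ 1 := by linarith
  have hp0 : 0 ≤ p := div_nonneg (by linarith) (by linarith)
  have hphalf : p ≤ 1/2 := by
    rw [hp, div_le_iff₀ (by linarith)]
    linarith
  have hp1 : p ≤ 1 := by linarith
  rcases Nat.lt_or_ge n 2 with hn2 | hn2
  · rcases (by omega : n = 0 ∨ n = 1) with h0 | h1
    · have hV : IsEmpty V := Fintype.card_eq_zero_iff.1 h0
      have hLHS : percProb G p (fun H => ∃ v : V,
          (9 * Real.log n / ε ^ 2) <
            (compSize (SimpleGraph.fromEdgeSet (↑H : Set (Sym2 V))) v : ℝ)) = 0 := by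
        simp only [percProb]
        apply Finset.sum_eq_zero
        intro H _
        rw [if_neg]
        rintro ⟨v, -⟩
        exact hV.elim v
      rw [hLHS, h0]
      rw [show ((0:ℕ):ℝ) = (0:ℝ) by norm_num, Real.zero_rpow (by norm_num)]
    · have hRHS : ((n:ℝ)) ^ (-(1/4 : ℝ)) = 1 := by
        rw [h1]
        simp [Real.one_rpow]
      rw [hRHS]
      calc percProb G p _ ≤ ∑ H ∈ G.edgeFinset.powerset,
            p ^ H.card * (1 - p) ^ (G.edgeFinset.card - H.card) := by
            simp only [percProb]
            apply Finset.sum_le_sum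
            intro H _
            have hq0 : (0:ℝ) ≤ 1 - p := by linarith
            split_ifs
            · exact le_refl _
            · exact mul_nonneg (pow_nonneg hp0 _) (pow_nonneg hq0 _)
        _ = 1 := sum_w p _
  · -- main case : n ≥ 2
    have hn1 : (1:ℝ) < (n:ℝ) := by exact_mod_cast Nat.lt_of_lt_of_le Nat.one_lt_two hn2
    have hn0 : (0:ℝ) < (n:ℝ) := by linarith
    have hlogn : 0 < Real.log n := Real.log_pos hn1
    set T : ℝ := 9 * Real.log n / ε ^ 2 with hT
    have hT0 : 0 ≤ T := by positivity
    set k := Nat.floor T + 1 with hk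
    have hk1 : 1 ≤ k := Nat.le_add_left 1 _
    have hK1 : (1:ℝ) ≤ (k:ℝ) := by exact_mod_cast hk1
    set t := Real.exp ε with ht
    have ht1 : 1 ≤ t := Real.one_le_exp hε.le
    set M := (d - 1) * k + 1 with hM
    -- union bound
    have hq0 : (0:ℝ) ≤ 1 - p := by linarith
    have hperc_eq : percProb G p (fun H => ∃ v : V,
          T < (compSize (SimpleGraph.fromEdgeSet (↑H : Set (Sym2 V))) v : ℝ))
        = ∑ H ∈ G.edgeFinset.powerset,
            p ^ H.card * (1 - p) ^ (G.edgeFinset.card - H.card) *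
            indi (∃ v : V, T < (compSize (SimpleGraph.fromEdgeSet (↑H : Set (Sym2 V))) v : ℝ)) := by
      simp only [percProb]
      apply Finset.sum_congr rfl
      intro H _
      by_cases hP : ∃ v : V, T < (compSize (SimpleGraph.fromEdgeSet (↑H : Set (Sym2 V))) v : ℝ)
      · rw [if_pos hP, indi_of_true hP, mul_one]
      · rw [if_neg hP, indi, if_neg hP, mul_zero]
    have hpoint : ∀ H ∈ G.edgeFinset.powerset,
        p ^ H.card * (1 - p) ^ (G.edgeFinset.card - H.card) *
          indi (∃ v : V, T < (compSize (SimpleGraph.fromEdgeSet (↑H : Set (Sym2 V))) v : ℝ))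
        ≤ ∑ v : V, p ^ H.card * (1 - p) ^ (G.edgeFinset.card - H.card) *
            indi (k ≤ compSize (SimpleGraph.fromEdgeSet (↑H : Set (Sym2 V))) v) := by
      intro H _
      have hw : 0 ≤ p ^ H.card * (1 - p) ^ (G.edgeFinset.card - H.card) :=
        mul_nonneg (pow_nonneg hp0 _) (pow_nonneg hq0 _)
      by_cases hP : ∃ v : V, T < (compSize (SimpleGraph.fromEdgeSet (↑H : Set (Sym2 V))) v : ℝ)
      · rw [indi_of_true hP, mul_one]
        obtain ⟨v0, hv0⟩ := hP
        have hev : k ≤ compSize (SimpleGraph.fromEdgeSet (↑H : Set (Sym2 V))) v0 := by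
          rw [hk]
          exact Nat.succ_le_of_lt ((Nat.floor_lt hT0).2 hv0)
        calc p ^ H.card * (1 - p) ^ (G.edgeFinset.card - H.card)
            = p ^ H.card * (1 - p) ^ (G.edgeFinset.card - H.card) *
              indi (k ≤ compSize (SimpleGraph.fromEdgeSet (↑H : Set (Sym2 V))) v0) := by
              rw [indi_of_true hev, mul_one]
          _ ≤ _ := Finset.single_le_sum
              (f := fun v => p ^ H.card * (1 - p) ^ (G.edgeFinset.card - H.card) *
                indi (k ≤ compSize (SimpleGraph.fromEdgeSet (↑H : Set (Sym2 V))) v))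
              (fun v _ => mul_nonneg hw (indi_nonneg _)) (Finset.mem_univ v0)
      · rw [indi, if_neg hP, mul_zero]
        exact Finset.sum_nonneg (fun v _ => mul_nonneg hw (indi_nonneg _))
    have hunion : percProb G p (fun H => ∃ v : V,
          T < (compSize (SimpleGraph.fromEdgeSet (↑H : Set (Sym2 V))) v : ℝ))
        ≤ ∑ v : V, ∑ H ∈ G.edgeFinset.powerset,
            p ^ H.card * (1 - p) ^ (G.edgeFinset.card - H.card) *
            indi (k ≤ compSize (SimpleGraph.fromEdgeSet (↑H : Set (Sym2 V))) v) := by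
      rw [hperc_eq]
      calc _ ≤ ∑ H ∈ G.edgeFinset.powerset, ∑ v : V,
            p ^ H.card * (1 - p) ^ (G.edgeFinset.card - H.card) *
            indi (k ≤ compSize (SimpleGraph.fromEdgeSet (↑H : Set (Sym2 V))) v) :=
            Finset.sum_le_sum hpoint
        _ = _ := Finset.sum_comm
    have hver : ∀ v : V, ∑ H ∈ G.edgeFinset.powerset,
          p ^ H.card * (1 - p) ^ (G.edgeFinset.card - H.card) *
          indi (k ≤ compSize (SimpleGraph.fromEdgeSet (↑H : Set (Sym2 V))) v)
        ≤ t⁻¹ ^ (k - 1) * (t * p + (1 - p)) ^ M :=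
      fun v => per_vertex hd hdeg hk1 p t hp0 hp1 ht1 v
    -- numerics
    have hcast_k : ((k - 1 : ℕ) : ℝ) = (k : ℝ) - 1 := by
      push_cast [Nat.cast_sub hk1]
      ring
    have hcast_M : ((M : ℕ) : ℝ) = ((d:ℝ) - 1) * (k:ℝ) + 1 := by
      rw [hM]
      push_cast [Nat.cast_sub (by omega : 1 ≤ d)]
      ring
    have hexpε : t - 1 ≤ ε + (3/4) * ε^2 := by
      have := exp_quad hε.le hε1
      rw [ht]
      linarith
    have ht1' : 0 ≤ t - 1 := by linarith
    have hbound1 : t⁻¹ ^ (k-1) = Real.exp (-(((k:ℝ) - 1) * ε)) := by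
      rw [ht, ← Real.exp_neg, ← Real.exp_nat_mul, hcast_k]
      ring_nf
    have hbound2 : (t * p + (1-p)) ^ M ≤ Real.exp ((M:ℝ) * (p * (t - 1))) := by
      have hb : t * p + (1-p) = 1 + p * (t-1) := by ring
      have hbn : 0 ≤ t * p + (1-p) := by nlinarith
      calc (t * p + (1-p)) ^ M ≤ (Real.exp (p * (t-1))) ^ M := by
            apply pow_le_pow_left₀ hbn
            rw [hb]
            linarith [Real.add_one_le_exp (p * (t-1))]
        _ = Real.exp ((M:ℝ) * (p * (t-1))) := (Real.exp_nat_mul _ M).symm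
    have hd1 : (d:ℝ) - 1 ≠ 0 := by linarith
    have hMp : (M:ℝ) * p = (1 - ε) * (k:ℝ) + p := by
      rw [hcast_M, hp]
      field_simp
    have h9 : 9 * Real.log n ≤ (k:ℝ) * ε^2 := by
      have hTk : T < (k:ℝ) := by
        rw [hk]
        push_cast
        exact Nat.lt_floor_add_one T
      have hε2 : (0:ℝ) < ε^2 := by positivity
      have hTe : T * ε^2 = 9 * Real.log n := by
        rw [hT]
        field_simp
      nlinarith
    have hE : -(((k:ℝ)-1) * ε) + (M:ℝ) * (p * (t-1)) ≤ 2*ε - (9/4) * Real.log n := by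
      have h2 : ((M:ℝ) * p) * (t-1) ≤ ((1-ε) * (k:ℝ) + 1/2) * (ε + (3/4)*ε^2) := by
        apply mul_le_mul _ hexpε ht1' _
        · rw [hMp]; linarith
        · nlinarith
      have h3 : (M:ℝ) * (p * (t-1)) = ((M:ℝ) * p) * (t-1) := by ring
      rw [h3]
      nlinarith [mul_nonneg (by linarith : (0:ℝ) ≤ (k:ℝ)) (by positivity : (0:ℝ) ≤ ε^3),
        sq_nonneg ε, mul_nonneg (by linarith : (0:ℝ) ≤ (k:ℝ)) (sq_nonneg ε)]
    have hfin1 : t⁻¹ ^ (k-1) * (t * p + (1-p)) ^ M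
        ≤ Real.exp (2*ε - (9/4) * Real.log n) := by
      rw [hbound1]
      calc Real.exp (-(((k:ℝ) - 1) * ε)) * (t * p + (1-p)) ^ M
          ≤ Real.exp (-(((k:ℝ) - 1) * ε)) * Real.exp ((M:ℝ) * (p * (t - 1))) :=
            mul_le_mul_of_nonneg_left hbound2 (Real.exp_pos _).le
        _ = Real.exp (-(((k:ℝ) - 1) * ε) + (M:ℝ) * (p * (t - 1))) := (Real.exp_add _ _).symm
        _ ≤ _ := Real.exp_le_exp.2 hE
    have hsplit : Real.exp (2*ε - (9/4) * Real.log n)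
        = Real.exp (2*ε) * (n:ℝ) ^ (-(9/4) : ℝ) := by
      rw [Real.rpow_def_of_pos hn0, ← Real.exp_add]
      congr 1
      ring
    have hexp2n : Real.exp (2*ε) ≤ (n:ℝ) := by
      have h12 : Real.exp (2*ε) ≤ Real.exp (1/2 : ℝ) := Real.exp_le_exp.2 (by linarith)
      have hq := exp_quad (x := 1/2) (by norm_num) (by norm_num)
      have h2 : Real.exp (1/2 : ℝ) ≤ 2 := by norm_num at hq ⊢; linarith
      have hn2' : (2:ℝ) ≤ (n:ℝ) := by exact_mod_cast hn2
      linarith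
    have hrp : (0:ℝ) ≤ (n:ℝ) ^ (-(9/4) : ℝ) := Real.rpow_nonneg hn0.le _
    have hfinal : (n:ℝ) * ((n:ℝ) * (n:ℝ) ^ (-(9/4):ℝ)) = (n:ℝ) ^ (-(1/4):ℝ) := by
      have h2 : (n:ℝ) ^ ((2:ℕ):ℝ) = (n:ℝ) ^ (2:ℕ) := Real.rpow_natCast _ 2
      calc (n:ℝ) * ((n:ℝ) * (n:ℝ) ^ (-(9/4):ℝ))
          = (n:ℝ) ^ (2:ℕ) * (n:ℝ) ^ (-(9/4):ℝ) := by ring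
        _ = (n:ℝ) ^ ((2:ℕ):ℝ) * (n:ℝ) ^ (-(9/4):ℝ) := by rw [h2]
        _ = (n:ℝ) ^ (((2:ℕ):ℝ) + (-(9/4):ℝ)) := (Real.rpow_add hn0 _ _).symm
        _ = (n:ℝ) ^ (-(1/4):ℝ) := by norm_num
    calc percProb G p _ ≤ ∑ v : V, ∑ H ∈ G.edgeFinset.powerset,
          p ^ H.card * (1 - p) ^ (G.edgeFinset.card - H.card) *
          indi (k ≤ compSize (SimpleGraph.fromEdgeSet (↑H : Set (Sym2 V))) v) := hunion
      _ ≤ ∑ _v : V, t⁻¹ ^ (k - 1) * (t * p + (1 - p)) ^ M :=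
          Finset.sum_le_sum (fun v _ => hver v)
      _ = (n:ℝ) * (t⁻¹ ^ (k - 1) * (t * p + (1 - p)) ^ M) := by
          rw [Finset.sum_const, Finset.card_univ, nsmul_eq_mul, hn]
      _ ≤ (n:ℝ) * (Real.exp (2*ε) * (n:ℝ) ^ (-(9/4) : ℝ)) := by
          apply mul_le_mul_of_nonneg_left _ hn0.le
          rw [← hsplit]
          exact hfin1
      _ ≤ (n:ℝ) * ((n:ℝ) * (n:ℝ) ^ (-(9/4) : ℝ)) := by
          apply mul_le_mul_of_nonneg_left _ hn0.le
          exact mul_le_mul_of_nonneg_right hexp2n hrp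
      _ = (n:ℝ) ^ (-(1/4):ℝ) := hfinal
end
end

section
/- Let y(c) denote the unique solution in (0,1) of y = 1 - e^{-cy} for c > 1. Then as ε → 0⁺, y(1+ε) = (1+o(1))·2ε; that is, y(1+ε)/(2ε) → 1 as ε → 0⁺. -/
open Real Filter Set

/-- Lower Taylor bound for `-log(1-y)`. -/
lemma neg_log_one_sub_ge (t : ℝ) (h0 : 0 < t) (h1 : t < 1) :
    t + t ^ 2 / 2 ≤ -Real.log (1 - t) := by
  have habs : |t| < 1 := by rw [abs_of_pos h0]; exact h1
  have hsum := Real.hasSum_pow_div_log_of_abs_lt_one habs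
  have h := sum_le_hasSum (Finset.range 2)
    (fun n _ => by positivity) hsum
  have : (∑ n ∈ Finset.range 2, t ^ (n + 1) / (n + 1)) = t + t ^ 2 / 2 := by
    simp [Finset.sum_range_succ]
    norm_num
  linarith [this ▸ h]

/-- Upper Taylor bound for `-log(1-y)`. -/
lemma neg_log_one_sub_le (t : ℝ) (h0 : 0 < t) (h1 : t < 1) :
    -Real.log (1 - t) ≤ t + t ^ 2 / 2 + t ^ 3 / (1 - t) := by
  have habs : |t| < 1 := by rw [abs_of_pos h0]; exact h1
  have h := Real.abs_log_sub_add_sum_range_le habs 2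
  have hs : (∑ i ∈ Finset.range 2, t ^ (i + 1) / (i + 1)) = t + t ^ 2 / 2 := by
    simp [Finset.sum_range_succ]
    norm_num
  rw [hs, abs_of_pos h0] at h
  have := abs_le.mp h
  linarith [this.1]

/-- Let `y c` denote the unique solution in `(0,1)` of `y = 1 - e^{-cy}` for
`c > 1`.  Then `y (1 + ε) = (1 + o(1)) · 2ε` as `ε → 0⁺`, i.e.
`y (1 + ε) / (2ε) → 1`. -/
theorem survival_root_asymptotics (y : ℝ → ℝ)
    (hy : ∀ c : ℝ, 1 < c → y c ∈ Set.Ioo (0 : ℝ) 1 ∧ y c = 1 - Real.exp (-(c * y c))) :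
    Filter.Tendsto (fun ε : ℝ => y (1 + ε) / (2 * ε)) (nhdsWithin 0 (Set.Ioi 0))
      (nhds 1) := by
  have key : ∀ ε : ℝ, 0 < ε → ε < 1/4 →
      1 / (1 + 8 * ε) ≤ y (1 + ε) / (2 * ε) ∧ y (1 + ε) / (2 * ε) ≤ 1 := by
    intro ε hε hε4
    obtain ⟨⟨ht0, ht1⟩, heq⟩ := hy (1 + ε) (by linarith)
    set t := y (1 + ε) with htdef
    -- From the fixed point equation, (1+ε) * t = -log(1-t)
    have hexp : Real.exp (-((1 + ε) * t)) = 1 - t := by linarith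
    have hlog : (1 + ε) * t = -Real.log (1 - t) := by
      rw [← hexp, Real.log_exp]; ring
    have hA := neg_log_one_sub_ge t ht0 ht1
    have hB := neg_log_one_sub_le t ht0 ht1
    rw [← hlog] at hA hB
    -- upper bound: t ≤ 2ε
    have hup : t ≤ 2 * ε := by nlinarith
    -- lower bound: 2ε/(1+8ε) ≤ t
    have ht2 : t ≤ 1 / 2 := by linarith
    have hden : (0:ℝ) < 1 - t := by linarith
    have hcube : t ^ 3 / (1 - t) ≤ 2 * t ^ 3 := by
      rw [div_le_iff₀ hden]
      nlinarith [mul_nonneg (pow_nonneg ht0.le 3) (show (0:ℝ) ≤ 1 - 2*t by linarith)]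
    have hlo : 2 * ε / (1 + 8 * ε) ≤ t := by
      rw [div_le_iff₀ (by linarith : (0:ℝ) < 1 + 8 * ε)]
      nlinarith
    constructor
    · rw [div_le_div_iff₀ (by linarith) (by linarith)]
      rw [div_le_iff₀ (by linarith : (0:ℝ) < 1 + 8 * ε)] at hlo
      linarith
    · rw [div_le_one (by linarith)]
      exact hup
  have hmem : Set.Ioo (0:ℝ) (1/4) ∈ nhdsWithin (0:ℝ) (Set.Ioi 0) :=
    Ioo_mem_nhdsGT_of_mem (by constructor <;> norm_num)
  have hbound : ∀ᶠ ε in nhdsWithin (0:ℝ) (Set.Ioi 0),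
      1 / (1 + 8 * ε) ≤ y (1 + ε) / (2 * ε) ∧ y (1 + ε) / (2 * ε) ≤ 1 :=
    Filter.eventually_of_mem hmem (fun ε hε => key ε hε.1 hε.2)
  have hlim : Filter.Tendsto (fun ε : ℝ => 1 / (1 + 8 * ε))
      (nhdsWithin (0:ℝ) (Set.Ioi 0)) (nhds 1) := by
    have : Filter.Tendsto (fun ε : ℝ => 1 / (1 + 8 * ε)) (nhds 0)
        (nhds (1 / (1 + 8 * 0))) := by
      apply Filter.Tendsto.div tendsto_const_nhds
      · exact (continuous_const.add (continuous_const.mul continuous_id)).tendsto 0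
      · norm_num
    simpa using this.mono_left nhdsWithin_le_nhds
  exact tendsto_of_tendsto_of_tendsto_of_le_of_le' hlim tendsto_const_nhds
    (hbound.mono fun ε h => h.1) (hbound.mono fun ε h => h.2)
end
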